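/- Let d ≥ 2 and β > d/2, and fix ε > 0 sufficiently small depending on β. Then sup_{W∈ℝ^d} ∫_{S^{d-1}} ⟨W^⊥⟩^{1−2β} ⟨W^∥⟩^{d−2+ε} dω < ∞ and sup_{W∈ℝ^d} ∫_{S^{d-1}} ⟨W^⊥⟩^{ε} ⟨W^∥⟩^{d−1−2β} dω < ∞, where W^∥ = (ω·W)ω and W^⊥ = W − W^∥. -/

import Mathlib

open MeasureTheory Real
open scoped ENNReal RealInnerProductSpace

noncomputable section

abbrev Ed (d : ℕ) : Type := EuclideanSpace ℝ (Fin d)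

def jap {d : ℕ} (y : Ed d) : ℝ := Real.sqrt (1 + ‖y‖ ^ 2)

/-- `W^∥ = (ω·W)ω`. -/
def par {d : ℕ} (ω W : Ed d) : Ed d := (⟪ω, W⟫ : ℝ) • ω

/-- `W^⊥ = W − W^∥`. -/
def perp {d : ℕ} (ω W : Ed d) : Ed d := W - par ω W

/-! Write `W = R u` with `‖u‖ = 1`. With `ε = 1/2`, the first integrand is at most
`‖perp ω u‖ ^ (-(d - 3/2))` and the second at most `‖par ω u‖ ^ (-3/4)`. On the sphere,
`{‖par ω u‖ ≤ t}` is a band of measure `≲ t` and `{‖perp ω u‖ ≤ t}` a pair of caps of measure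
`≲ t ^ (d - 1)`: in an orthonormal basis containing `u` both lie in boxes, and a box meets the
sphere in a set of measure `≲` the product of its sides, because on each chart
`{(√d)⁻¹ ≤ ± x i}` dropping the coordinate `i` is bi-Lipschitz. Summing over dyadic layers in `t`
gives bounds independent of `W`. -/

open Set Metric

section ParPerp

variable {d : ℕ}

lemma par_smul_right (ω W : Ed d) (r : ℝ) : par ω (r • W) = r • par ω W := by
  simp only [par, inner_smul_right, smul_smul]

lemma perp_smul_right (ω W : Ed d) (r : ℝ) : perp ω (r • W) = r • perp ω W := by
  simp only [perp, par_smul_right, smul_sub]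

lemma norm_par {ω : Ed d} (hω : ‖ω‖ = 1) (W : Ed d) : ‖par ω W‖ = |⟪ω, W⟫| := by
  rw [par, norm_smul, hω, mul_one, Real.norm_eq_abs]

lemma norm_perp_sq {ω : Ed d} (hω : ‖ω‖ = 1) (W : Ed d) :
    ‖perp ω W‖ ^ 2 = ‖W‖ ^ 2 - ⟪ω, W⟫ ^ 2 := by
  rw [perp, norm_sub_sq_real, norm_par hω, sq_abs, par, inner_smul_right, real_inner_comm]
  ring

lemma norm_par_le {ω : Ed d} (hω : ‖ω‖ = 1) (W : Ed d) : ‖par ω W‖ ≤ ‖W‖ := by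
  simpa [norm_par hω, hω] using abs_real_inner_le_norm ω W

lemma norm_perp_le {ω : Ed d} (hω : ‖ω‖ = 1) (W : Ed d) : ‖perp ω W‖ ≤ ‖W‖ :=
  (pow_le_pow_iff_left₀ (norm_nonneg _) (norm_nonneg _) two_ne_zero).mp <| by
    rw [norm_perp_sq hω]; nlinarith [sq_nonneg ⟪ω, W⟫]

lemma norm_perp_comm {ω u : Ed d} (hω : ‖ω‖ = 1) (hu : ‖u‖ = 1) :
    ‖perp ω u‖ = ‖perp u ω‖ := by
  rw [← sq_eq_sq₀ (norm_nonneg _) (norm_nonneg _), norm_perp_sq hω, norm_perp_sq hu, hω, hu,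
    real_inner_comm]

lemma inner_perp_of_inner_eq_zero {u v : Ed d} (h : ⟪v, u⟫ = 0) (ω : Ed d) :
    ⟪v, perp u ω⟫ = ⟪v, ω⟫ := by
  rw [perp, par, inner_sub_right, inner_smul_right, h, mul_zero, sub_zero]

end ParPerp

section Jap

variable {d : ℕ}

lemma one_le_jap (y : Ed d) : 1 ≤ jap y :=
  Real.one_le_sqrt.mpr (le_add_of_nonneg_right (sq_nonneg _))

lemma jap_pos (y : Ed d) : 0 < jap y :=
  zero_lt_one.trans_le (one_le_jap y)

lemma jap_le_jap {y z : Ed d} (h : ‖y‖ ≤ ‖z‖) : jap y ≤ jap z := by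
  unfold jap; gcongr

lemma mul_jap_le_jap {x : ℝ} {y z : Ed d} (hx0 : 0 ≤ x) (hx1 : x ≤ 1) (h : ‖y‖ = x * ‖z‖) :
    x * jap z ≤ jap y := by
  rw [jap, jap, ← Real.sqrt_sq hx0, ← Real.sqrt_mul (sq_nonneg x), h]
  gcongr
  nlinarith [mul_le_one₀ hx1 hx0 hx1]

/-- Since `⟨y⟩ ≥ x ⟨W⟩ ≥ x ⟨z⟩`, the positive power of `⟨z⟩` is absorbed by the negative power
of `⟨y⟩`. -/
lemma jap_rpow_mul_jap_rpow_le {x a b g : ℝ} {y z W : Ed d} (hx0 : 0 < x) (hx1 : x ≤ 1)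
    (hy : ‖y‖ = x * ‖W‖) (hz : ‖z‖ ≤ ‖W‖) (hb : 0 ≤ b) (hbg : b ≤ g) (hag : a ≤ -g) :
    jap y ^ a * jap z ^ b ≤ x ^ (-g) := by
  have hW := jap_pos W
  calc jap y ^ a * jap z ^ b
      ≤ (x * jap W) ^ (-g) * jap W ^ b := by
        refine mul_le_mul ?_ (Real.rpow_le_rpow (jap_pos z).le (jap_le_jap hz) hb)
          (Real.rpow_nonneg (jap_pos z).le b) (Real.rpow_nonneg (by positivity) _)
        exact (Real.rpow_le_rpow_of_exponent_le (one_le_jap y) hag).trans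
          (Real.rpow_le_rpow_of_nonpos (by positivity) (mul_jap_le_jap hx0.le hx1 hy)
            (by linarith))
    _ = x ^ (-g) * jap W ^ (b - g) := by
        rw [Real.mul_rpow hx0.le hW.le, Real.rpow_sub hW, Real.rpow_neg hW.le]
        ring
    _ ≤ x ^ (-g) := by
        refine mul_le_of_le_one_right (by positivity) ?_
        exact Real.rpow_le_one_of_one_le_of_nonpos (one_le_jap W) (by linarith)

lemma ofReal_jap_rpow_mul_jap_rpow_le {x a b g : ℝ} {y z W : Ed d} (hx0 : 0 ≤ x) (hx1 : x ≤ 1)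
    (hy : ‖y‖ = x * ‖W‖) (hz : ‖z‖ ≤ ‖W‖) (hb : 0 ≤ b) (hbg : b ≤ g) (hag : a ≤ -g)
    (hg : 0 < g) :
    ENNReal.ofReal (jap y ^ a * jap z ^ b) ≤ ENNReal.ofReal x ^ (-g) := by
  rcases hx0.eq_or_lt with rfl | hx0
  · rw [ENNReal.ofReal_zero, ENNReal.zero_rpow_of_neg (neg_neg_of_pos hg)]
    exact le_top
  · rw [ENNReal.ofReal_rpow_of_pos hx0]
    exact ENNReal.ofReal_le_ofReal (jap_rpow_mul_jap_rpow_le hx0 hx1 hy hz hb hbg hag)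

end Jap

section SphereCharts

variable {n : ℕ}

lemma sum_sq_eq_one {x : Ed n} (hx : ‖x‖ = 1) : ∑ j, x j ^ 2 = 1 := by
  simpa [EuclideanSpace.norm_eq, Real.norm_eq_abs, sq_abs] using hx

lemma abs_apply_le_one {x : Ed n} (hx : ‖x‖ = 1) (j : Fin n) : |x j| ≤ 1 := by
  simpa [hx] using PiLp.norm_apply_le x j

lemma abs_apply_sub_le_dist_removeNth {x y : Ed (n + 1)} (i : Fin (n + 1)) (k : Fin n) :
    |x (i.succAbove k) - y (i.succAbove k)| ≤
      dist (Fin.removeNth i x.ofLp) (Fin.removeNth i y.ofLp) := by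
  have := dist_le_pi_dist (Fin.removeNth i x.ofLp) (Fin.removeNth i y.ofLp) k
  rwa [Real.dist_eq] at this

/-- On the sphere `x i ^ 2 = 1 - ∑ k, x (i.succAbove k) ^ 2`, and `|x i + y i| ≥ 2 c` lets us
divide `x i ^ 2 - y i ^ 2` by it. -/
lemma abs_apply_sub_le_mul_dist_removeNth {i : Fin (n + 1)} {σ c : ℝ} (hσ : |σ| = 1)
    (hc : 0 < c) {x y : Ed (n + 1)} (hx : ‖x‖ = 1) (hy : ‖y‖ = 1) (hxi : c ≤ σ * x i)
    (hyi : c ≤ σ * y i) :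
    |x i - y i| ≤ n / c * dist (Fin.removeNth i x.ofLp) (Fin.removeNth i y.ofLp) := by
  set δ := dist (Fin.removeNth i x.ofLp) (Fin.removeNth i y.ofLp)
  have hsq : x i ^ 2 - y i ^ 2 = ∑ k, (y (i.succAbove k) ^ 2 - x (i.succAbove k) ^ 2) := by
    have hx' := sum_sq_eq_one hx
    have hy' := sum_sq_eq_one hy
    rw [Fin.sum_univ_succAbove _ i] at hx' hy'
    rw [Finset.sum_sub_distrib]
    linarith
  have hsum : 2 * c * |x i - y i| ≤ 2 * n * δ := calc
    2 * c * |x i - y i| ≤ |x i + y i| * |x i - y i| := by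
      gcongr
      rw [← one_mul |x i + y i|, ← hσ, ← abs_mul]
      exact (by linarith : 2 * c ≤ σ * (x i + y i)).trans (le_abs_self _)
    _ = |x i ^ 2 - y i ^ 2| := by rw [← abs_mul]; ring_nf
    _ ≤ ∑ k, |y (i.succAbove k) ^ 2 - x (i.succAbove k) ^ 2| := by
      rw [hsq]; exact Finset.abs_sum_le_sum_abs _ _
    _ ≤ ∑ _k : Fin n, δ * 2 := by
      gcongr with k
      rw [sq_sub_sq, abs_mul, abs_sub_comm, mul_comm]
      refine mul_le_mul (abs_apply_sub_le_dist_removeNth i k) ?_ (abs_nonneg _) dist_nonneg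
      linarith [abs_add_le (y (i.succAbove k)) (x (i.succAbove k)),
        abs_apply_le_one hx (i.succAbove k), abs_apply_le_one hy (i.succAbove k)]
    _ = 2 * n * δ := by simp; ring
  rw [div_mul_eq_mul_div, le_div_iff₀ hc]
  nlinarith

lemma dist_le_mul_dist_removeNth {i : Fin (n + 1)} {σ c : ℝ} (hσ : |σ| = 1) (hc : 0 < c)
    {x y : Ed (n + 1)} (hx : ‖x‖ = 1) (hy : ‖y‖ = 1) (hxi : c ≤ σ * x i) (hyi : c ≤ σ * y i) :
    dist x y ≤ √(n + 1) * (1 + n / c) *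
      dist (Fin.removeNth i x.ofLp) (Fin.removeNth i y.ofLp) := by
  have hδ : 0 ≤ dist (Fin.removeNth i x.ofLp) (Fin.removeNth i y.ofLp) := dist_nonneg
  have hnc : 0 ≤ n / c := by positivity
  have hcoord : dist x.ofLp y.ofLp ≤
      (1 + n / c) * dist (Fin.removeNth i x.ofLp) (Fin.removeNth i y.ofLp) := by
    refine (dist_pi_le_iff (by positivity)).mpr fun j => ?_
    rw [Real.dist_eq]
    obtain rfl | ⟨k, rfl⟩ := i.eq_self_or_eq_succAbove j
    · exact (abs_apply_sub_le_mul_dist_removeNth hσ hc hx hy hxi hyi).trans (by linarith)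
    · exact (abs_apply_sub_le_dist_removeNth i k).trans (by nlinarith)
  calc dist x y ≤ √(n + 1) * dist x.ofLp y.ofLp := by
        have := (PiLp.antilipschitzWith_ofLp 2 fun _ : Fin (n + 1) => ℝ).le_mul_dist x y
        simpa [Real.sqrt_eq_rpow] using this
    _ ≤ _ := by rw [mul_assoc]; gcongr

lemma hausdorffMeasure_le_volume_image_removeNth {i : Fin (n + 1)} {σ c : ℝ} (hσ : |σ| = 1)
    (hc : 0 < c) {A : Set (Ed (n + 1))} (hA : ∀ x ∈ A, ‖x‖ = 1 ∧ c ≤ σ * x i) :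
    μH[n] A ≤ ENNReal.ofReal (√(n + 1) * (1 + n / c)) ^ (n : ℝ) *
      volume ((fun x : Ed (n + 1) => Fin.removeNth i x.ofLp) '' A) := by
  set f : A → (Fin n → ℝ) := fun x => Fin.removeNth i (x : Ed (n + 1)).ofLp
  have hf : AntilipschitzWith (√(n + 1) * (1 + n / c)).toNNReal f :=
    AntilipschitzWith.of_le_mul_dist fun x y => by
      rw [Real.coe_toNNReal _ (by positivity)]
      exact dist_le_mul_dist_removeNth hσ hc (hA x x.2).1 (hA y y.2).1 (hA x x.2).2 (hA y y.2).2
  have hvol : (μH[n] : Measure (Fin n → ℝ)) = volume := by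
    simpa using hausdorffMeasure_pi_real (ι := Fin n)
  calc μH[n] A = μH[n] (univ : Set A) := by
        rw [← (isometry_subtype_coe (s := A)).hausdorffMeasure_image (Or.inl n.cast_nonneg),
          image_univ, Subtype.range_coe]
    _ ≤ _ := hf.le_hausdorffMeasure_image n.cast_nonneg _
    _ = _ := by
        rw [hvol, image_univ, range_comp' (fun x : Ed (n + 1) => Fin.removeNth i x.ofLp),
          Subtype.range_coe]
        rfl

/-- The chart meets the box only if `c i ≥ c`, which pays for the factor `c i` missing from the
volume of the projected box. -/
lemma hausdorffMeasure_le_prod_of_chart {i : Fin (n + 1)} {σ c : ℝ} (hσ : |σ| = 1) (hc : 0 < c)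
    {A : Set (Ed (n + 1))} (hA : ∀ x ∈ A, ‖x‖ = 1 ∧ c ≤ σ * x i) {b : Fin (n + 1) → ℝ}
    (hb : ∀ x ∈ A, ∀ j, |x j| ≤ b j) :
    μH[n] A ≤ ENNReal.ofReal (√(n + 1) * (1 + n / c)) ^ (n : ℝ) * 2 ^ n * ENNReal.ofReal c⁻¹ *
      ∏ j, ENNReal.ofReal (b j) := by
  rcases A.eq_empty_or_nonempty with rfl | ⟨x₀, hx₀⟩
  · simp
  have hbi : 1 ≤ ENNReal.ofReal c⁻¹ * ENNReal.ofReal (b i) := by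
    have : c ≤ b i := (hA x₀ hx₀).2.trans <| (le_abs_self _).trans <| by
      rw [abs_mul, hσ, one_mul]; exact hb x₀ hx₀ i
    rw [← ENNReal.ofReal_mul (by positivity), ← ENNReal.ofReal_one]
    exact ENNReal.ofReal_le_ofReal ((inv_mul_cancel₀ hc.ne').symm.trans_le (by gcongr))
  have hbox : (fun x : Ed (n + 1) => Fin.removeNth i x.ofLp) '' A ⊆
      Icc (-(b ∘ i.succAbove)) (b ∘ i.succAbove) := by
    rintro _ ⟨x, hx, rfl⟩
    exact ⟨fun k => (abs_le.mp (hb x hx (i.succAbove k))).1,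
      fun k => (abs_le.mp (hb x hx (i.succAbove k))).2⟩
  calc μH[n] A
      ≤ ENNReal.ofReal (√(n + 1) * (1 + n / c)) ^ (n : ℝ) *
          volume (Icc (-(b ∘ i.succAbove)) (b ∘ i.succAbove)) :=
        (hausdorffMeasure_le_volume_image_removeNth hσ hc hA).trans (by gcongr)
    _ = ENNReal.ofReal (√(n + 1) * (1 + n / c)) ^ (n : ℝ) * 2 ^ n *
          ∏ k, ENNReal.ofReal (b (i.succAbove k)) := by
        rw [Real.volume_Icc_pi, mul_assoc]
        simp [← two_mul, ENNReal.ofReal_mul, Finset.prod_mul_distrib]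
    _ ≤ ENNReal.ofReal (√(n + 1) * (1 + n / c)) ^ (n : ℝ) * 2 ^ n *
          (ENNReal.ofReal c⁻¹ * ENNReal.ofReal (b i) *
            ∏ k, ENNReal.ofReal (b (i.succAbove k))) := by
        gcongr; exact le_mul_of_one_le_left zero_le hbi
    _ = _ := by rw [Fin.prod_univ_succAbove _ i]; ring

lemma exists_inv_sqrt_le_abs_apply {x : Ed (n + 1)} (hx : ‖x‖ = 1) :
    ∃ i, (√(n + 1))⁻¹ ≤ |x i| := by
  by_contra! h
  have hlt : ∑ j, x j ^ 2 < ∑ _j : Fin (n + 1), ((√(n + 1))⁻¹) ^ 2 :=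
    Finset.sum_lt_sum_of_nonempty Finset.univ_nonempty fun j _ => by
      rw [← sq_abs]; exact pow_lt_pow_left₀ (h j) (abs_nonneg _) two_ne_zero
  rw [sum_sq_eq_one hx, Finset.sum_const, Finset.card_univ, Fintype.card_fin, inv_pow,
    Real.sq_sqrt (by positivity), nsmul_eq_mul] at hlt
  push_cast at hlt
  rw [mul_inv_cancel₀ (by positivity)] at hlt
  exact lt_irrefl _ hlt

/-- The sphere is covered by the `2 (n + 1)` charts `{(√(n + 1))⁻¹ ≤ ± x i}`. -/
theorem exists_hausdorffMeasure_sphere_le_prod (n : ℕ) :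
    ∃ C : ℝ≥0∞, C ≠ ⊤ ∧ ∀ (b : Fin (n + 1) → ℝ) (A : Set (Ed (n + 1))), A ⊆ sphere 0 1 →
      (∀ x ∈ A, ∀ j, |x j| ≤ b j) → μH[n] A ≤ C * ∏ j, ENNReal.ofReal (b j) := by
  set c : ℝ := (√(n + 1))⁻¹
  set B := ENNReal.ofReal (√(n + 1) * (1 + n / c)) ^ (n : ℝ) * 2 ^ n * ENNReal.ofReal c⁻¹
  have hB : B ≠ ⊤ := by
    refine ENNReal.mul_ne_top (ENNReal.mul_ne_top ?_ (by simp)) ENNReal.ofReal_ne_top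
    exact ENNReal.rpow_ne_top_of_nonneg n.cast_nonneg ENNReal.ofReal_ne_top
  refine ⟨(n + 1) * (B + B), by finiteness, fun b A hA hb => ?_⟩
  have hpiece : ∀ i (σ : ℝ), |σ| = 1 →
      μH[n] {x ∈ A | c ≤ σ * x i} ≤ B * ∏ j, ENNReal.ofReal (b j) :=
    fun i σ hσ => hausdorffMeasure_le_prod_of_chart hσ (by positivity)
      (fun x hx => ⟨mem_sphere_zero_iff_norm.mp (hA hx.1), hx.2⟩) fun x hx => hb x hx.1
  have hcover : A ⊆ ⋃ i, ({x ∈ A | c ≤ 1 * x i} ∪ {x ∈ A | c ≤ -1 * x i}) := by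
    intro x hx
    obtain ⟨i, hi⟩ := exists_inv_sqrt_le_abs_apply (mem_sphere_zero_iff_norm.mp (hA hx))
    refine mem_iUnion.mpr ⟨i, ?_⟩
    rcases le_abs'.mp hi with h | h
    · exact Or.inr ⟨hx, by linarith⟩
    · exact Or.inl ⟨hx, by linarith⟩
  calc μH[n] A ≤ ∑ i, (μH[n] {x ∈ A | c ≤ 1 * x i} + μH[n] {x ∈ A | c ≤ -1 * x i}) :=
        (measure_mono hcover).trans <| (measure_iUnion_fintype_le _ _).trans <|
          Finset.sum_le_sum fun i _ => measure_union_le _ _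
    _ ≤ ∑ _i : Fin (n + 1), (B * ∏ j, ENNReal.ofReal (b j) + B * ∏ j, ENNReal.ofReal (b j)) := by
        gcongr with i
        · exact hpiece i 1 (by simp)
        · exact hpiece i (-1) (by simp)
    _ = (n + 1) * (B + B) * ∏ j, ENNReal.ofReal (b j) := by simp; ring

lemma exists_norm_eq_one_eq_smul (W : Ed (n + 1)) :
    ∃ (R : ℝ) (u : Ed (n + 1)), ‖u‖ = 1 ∧ W = R • u := by
  rcases eq_or_ne W 0 with rfl | hW
  · exact ⟨0, EuclideanSpace.single 0 1, by simp, by simp⟩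
  · exact ⟨‖W‖, ‖W‖⁻¹ • W, norm_smul_inv_norm hW,
      by rw [smul_smul, mul_inv_cancel₀ (norm_ne_zero_iff.mpr hW), one_smul]⟩

lemma exists_orthonormalBasis_apply_zero_eq {u : Ed (n + 1)} (hu : ‖u‖ = 1) :
    ∃ b : OrthonormalBasis (Fin (n + 1)) ℝ (Ed (n + 1)), b 0 = u := by
  have horth : Orthonormal ℝ (({0} : Set (Fin (n + 1))).domRestrict fun _ => u) :=
    ⟨fun _ => hu, fun i j hij => (hij (Subtype.ext (i.2.trans j.2.symm))).elim⟩
  obtain ⟨b, hb⟩ := horth.exists_orthonormalBasis_extension_of_card_eq (by simp)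
  exact ⟨b, hb 0 rfl⟩

theorem exists_hausdorffMeasure_sphere_le_prod_inner (n : ℕ) :
    ∃ C : ℝ≥0∞, C ≠ ⊤ ∧ ∀ (b : OrthonormalBasis (Fin (n + 1)) ℝ (Ed (n + 1)))
      (c : Fin (n + 1) → ℝ) (A : Set (Ed (n + 1))), A ⊆ sphere 0 1 →
      (∀ x ∈ A, ∀ j, |⟪b j, x⟫| ≤ c j) → μH[n] A ≤ C * ∏ j, ENNReal.ofReal (c j) := by
  obtain ⟨C, hC, hbox⟩ := exists_hausdorffMeasure_sphere_le_prod n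
  refine ⟨C, hC, fun b c A hA hc => ?_⟩
  rw [← b.repr.isometry.hausdorffMeasure_image (Or.inr b.repr.surjective)]
  refine hbox c _ ?_ ?_
  · rintro _ ⟨x, hx, rfl⟩
    simpa using hA hx
  · rintro _ ⟨x, hx, rfl⟩ j
    simpa [b.repr_apply_apply] using hc x hx j

theorem exists_hausdorffMeasure_sphere_norm_par_le (n : ℕ) :
    ∃ C : ℝ≥0∞, C ≠ ⊤ ∧ ∀ u : Ed (n + 1), ‖u‖ = 1 → ∀ t : ℝ,
      μH[n] {ω ∈ sphere 0 1 | ‖par ω u‖ ≤ t} ≤ C * ENNReal.ofReal t := by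
  obtain ⟨C, hC, hbox⟩ := exists_hausdorffMeasure_sphere_le_prod_inner n
  refine ⟨C, hC, fun u hu t => ?_⟩
  obtain ⟨b, rfl⟩ := exists_orthonormalBasis_apply_zero_eq hu
  refine (hbox b (Fin.cons t fun _ => 1) _ (fun ω hω => hω.1) fun ω hω j => ?_).trans_eq
    (by simp [Fin.prod_univ_succ])
  have hω1 : ‖ω‖ = 1 := mem_sphere_zero_iff_norm.mp hω.1
  refine Fin.cases ?_ (fun k => ?_) j
  · simpa [norm_par hω1, real_inner_comm] using hω.2
  · simpa [hω1] using abs_real_inner_le_norm (b k.succ) ω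

/-- In a basis `b` with `b 0 = u`, the coordinates `⟪b j, ω⟫`, `j ≠ 0`, are those of the component
of `ω` orthogonal to `u`, whose length is `‖perp ω u‖`. -/
theorem exists_hausdorffMeasure_sphere_norm_perp_le (n : ℕ) :
    ∃ C : ℝ≥0∞, C ≠ ⊤ ∧ ∀ u : Ed (n + 1), ‖u‖ = 1 → ∀ t : ℝ,
      μH[n] {ω ∈ sphere 0 1 | ‖perp ω u‖ ≤ t} ≤ C * ENNReal.ofReal t ^ n := by
  obtain ⟨C, hC, hbox⟩ := exists_hausdorffMeasure_sphere_le_prod_inner n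
  refine ⟨C, hC, fun u hu t => ?_⟩
  obtain ⟨b, rfl⟩ := exists_orthonormalBasis_apply_zero_eq hu
  refine (hbox b (Fin.cons 1 fun _ => t) _ (fun ω hω => hω.1) fun ω hω j => ?_).trans_eq
    (by simp [Fin.prod_univ_succ])
  have hω1 : ‖ω‖ = 1 := mem_sphere_zero_iff_norm.mp hω.1
  refine Fin.cases ?_ (fun k => ?_) j
  · simpa [hω1] using abs_real_inner_le_norm (b 0) ω
  · have horth : ⟪b k.succ, b 0⟫ = 0 := b.orthonormal.2 (Fin.succ_ne_zero k)
    calc |⟪b k.succ, ω⟫| = |⟪b k.succ, perp (b 0) ω⟫| := by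
          rw [inner_perp_of_inner_eq_zero horth]
      _ ≤ ‖perp (b 0) ω‖ := by simpa using abs_real_inner_le_norm (b k.succ) (perp (b 0) ω)
      _ ≤ t := by rw [← norm_perp_comm hω1 hu]; exact hω.2

end SphereCharts

section Dyadic

lemma ofReal_two_inv_pow_pow (k m : ℕ) :
    ENNReal.ofReal ((2 : ℝ)⁻¹ ^ k) ^ m = ((2 : ℝ≥0∞) ^ (-(m : ℝ))) ^ k := by
  rw [ENNReal.ofReal_pow (by norm_num), ENNReal.ofReal_inv_of_pos (by norm_num),
    ENNReal.ofReal_ofNat, ← pow_mul, mul_comm, pow_mul, ENNReal.rpow_neg, ENNReal.rpow_natCast,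
    ENNReal.inv_pow]

lemma ofReal_two_inv_pow_succ_rpow_neg (k : ℕ) (γ : ℝ) :
    ENNReal.ofReal ((2 : ℝ)⁻¹ ^ (k + 1)) ^ (-γ) = 2 ^ γ * ((2 : ℝ≥0∞) ^ γ) ^ k := by
  rw [ENNReal.ofReal_pow (by norm_num), ENNReal.ofReal_inv_of_pos (by norm_num),
    ENNReal.ofReal_ofNat, ← ENNReal.inv_pow, ENNReal.rpow_neg, ENNReal.inv_rpow, inv_inv,
    ← ENNReal.rpow_natCast, ← ENNReal.rpow_mul, mul_comm, ENNReal.rpow_mul, ENNReal.rpow_natCast,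
    pow_succ']

variable {α : Type*} [MeasurableSpace α] {ν : Measure α} {S : Set α} {g : α → ℝ} {C : ℝ≥0∞}
  {γ : ℝ} {m : ℕ}

/-- Split `S` into the layers `2⁻¹ ^ (k + 1) < g ≤ 2⁻¹ ^ k`, where the integrand is at most
`2 ^ ((k + 1) γ)` and the measure at most `C 2 ^ (-k m)`; the rest, `{g ≤ 0}`, is null. -/
theorem setLIntegral_ofReal_rpow_neg_le (hC : C ≠ ⊤) (hγ : 0 ≤ γ) (hγm : γ < m)
    (hg : ∀ x ∈ S, g x ≤ 1)
    (hν : ∀ t : ℝ, 0 < t → ν {x ∈ S | g x ≤ t} ≤ C * ENNReal.ofReal t ^ m) :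
    ∫⁻ x in S, ENNReal.ofReal (g x) ^ (-γ) ∂ν ≤ C * 2 ^ γ * (1 - 2 ^ (γ - m))⁻¹ := by
  set layer : ℕ → Set α := fun k => {x ∈ S | (2 : ℝ)⁻¹ ^ (k + 1) < g x ∧ g x ≤ (2 : ℝ)⁻¹ ^ k}
  have hlevel : ∀ k : ℕ,
      ν {x ∈ S | g x ≤ (2 : ℝ)⁻¹ ^ k} ≤ C * ((2 : ℝ≥0∞) ^ (-(m : ℝ))) ^ k := fun k =>
    (hν _ (by positivity)).trans_eq (by rw [ofReal_two_inv_pow_pow])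
  have hnull : ν {x ∈ S | g x ≤ 0} = 0 := by
    have hr : (2 : ℝ≥0∞) ^ (-(m : ℝ)) < 1 :=
      ENNReal.rpow_lt_one_of_one_lt_of_neg (by norm_num) (by linarith)
    have htend : Filter.Tendsto (fun k : ℕ => C * ((2 : ℝ≥0∞) ^ (-(m : ℝ))) ^ k)
        Filter.atTop (nhds 0) := by
      simpa using ENNReal.Tendsto.const_mul (ENNReal.tendsto_pow_atTop_nhds_zero_of_lt_one hr)
        (Or.inr hC)
    refine le_antisymm (ge_of_tendsto htend (Filter.Eventually.of_forall fun k =>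
      (measure_mono (show _ ⊆ {x ∈ S | g x ≤ (2 : ℝ)⁻¹ ^ k} from
        fun x hx => ⟨hx.1, hx.2.trans (by positivity)⟩)).trans (hlevel k))) zero_le
  have hcover : S ⊆ {x ∈ S | g x ≤ 0} ∪ ⋃ k, layer k := by
    intro x hx
    rcases le_or_gt (g x) 0 with h | h
    · exact Or.inl ⟨hx, h⟩
    · obtain ⟨k, hk⟩ :=
        exists_nat_pow_near_of_lt_one (y := (2 : ℝ)⁻¹) h (hg x hx) (by norm_num) (by norm_num)
      exact Or.inr (mem_iUnion.mpr ⟨k, hx, hk⟩)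
  have hlayer : ∀ k, ∫⁻ x in layer k, ENNReal.ofReal (g x) ^ (-γ) ∂ν ≤
      2 ^ γ * ((2 : ℝ≥0∞) ^ γ) ^ k * (C * ((2 : ℝ≥0∞) ^ (-(m : ℝ))) ^ k) := by
    intro k
    calc ∫⁻ x in layer k, ENNReal.ofReal (g x) ^ (-γ) ∂ν
        ≤ ∫⁻ _ in layer k, 2 ^ γ * ((2 : ℝ≥0∞) ^ γ) ^ k ∂ν := by
          refine setLIntegral_mono measurable_const fun x hx => ?_
          rw [← ofReal_two_inv_pow_succ_rpow_neg, ENNReal.rpow_neg, ENNReal.rpow_neg]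
          exact ENNReal.inv_le_inv.mpr
            (ENNReal.rpow_le_rpow (ENNReal.ofReal_le_ofReal hx.2.1.le) hγ)
      _ = 2 ^ γ * ((2 : ℝ≥0∞) ^ γ) ^ k * ν (layer k) := setLIntegral_const _ _
      _ ≤ _ := by
          gcongr
          exact (measure_mono (show layer k ⊆ {x ∈ S | g x ≤ (2 : ℝ)⁻¹ ^ k} from
            fun x hx => ⟨hx.1, hx.2.2⟩)).trans (hlevel k)
  calc ∫⁻ x in S, ENNReal.ofReal (g x) ^ (-γ) ∂ν
      ≤ ∫⁻ x in {x ∈ S | g x ≤ 0} ∪ ⋃ k, layer k, ENNReal.ofReal (g x) ^ (-γ) ∂ν :=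
        lintegral_mono_set hcover
    _ ≤ ∑' k, ∫⁻ x in layer k, ENNReal.ofReal (g x) ^ (-γ) ∂ν := by
        refine (lintegral_union_le _ _ _).trans ?_
        rw [setLIntegral_measure_zero _ _ hnull, zero_add]
        exact lintegral_iUnion_le _ _
    _ ≤ ∑' k : ℕ, C * 2 ^ γ * ((2 : ℝ≥0∞) ^ (γ - m)) ^ k := by
        refine ENNReal.tsum_le_tsum fun k => (hlayer k).trans_eq ?_
        rw [sub_eq_add_neg, ENNReal.rpow_add _ _ two_ne_zero ENNReal.ofNat_ne_top, mul_pow]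
        ring
    _ = C * 2 ^ γ * (1 - 2 ^ (γ - m))⁻¹ := by
        rw [ENNReal.tsum_mul_left, ENNReal.tsum_geometric]

lemma mul_two_rpow_mul_inv_one_sub_two_rpow_ne_top (hC : C ≠ ⊤) (hγm : γ < m) :
    C * 2 ^ γ * (1 - 2 ^ (γ - m))⁻¹ ≠ ⊤ := by
  have : (1 - (2 : ℝ≥0∞) ^ (γ - m))⁻¹ ≠ ⊤ := ENNReal.inv_ne_top.mpr
    (tsub_pos_of_lt (ENNReal.rpow_lt_one_of_one_lt_of_neg (by norm_num) (by linarith))).ne'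
  finiteness

end Dyadic

section Integrands

variable {d : ℕ}

lemma ofReal_jap_rpow_mul_le_norm_perp_rpow {ω u : Ed d} (hω : ‖ω‖ = 1) (hu : ‖u‖ = 1)
    (R : ℝ) {a b g : ℝ} (hb : 0 ≤ b) (hbg : b ≤ g) (hag : a ≤ -g) (hg : 0 < g) :
    ENNReal.ofReal (jap (perp ω (R • u)) ^ a * jap (par ω (R • u)) ^ b) ≤
      ENNReal.ofReal ‖perp ω u‖ ^ (-g) :=
  ofReal_jap_rpow_mul_jap_rpow_le (norm_nonneg _) (hu ▸ norm_perp_le hω u)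
    (by rw [perp_smul_right, norm_smul, norm_smul, hu, mul_one, mul_comm]) (norm_par_le hω _)
    hb hbg hag hg

lemma ofReal_jap_rpow_mul_le_norm_par_rpow {ω u : Ed d} (hω : ‖ω‖ = 1) (hu : ‖u‖ = 1)
    (R : ℝ) {a b g : ℝ} (hb : 0 ≤ b) (hbg : b ≤ g) (hag : a ≤ -g) (hg : 0 < g) :
    ENNReal.ofReal (jap (perp ω (R • u)) ^ b * jap (par ω (R • u)) ^ a) ≤
      ENNReal.ofReal ‖par ω u‖ ^ (-g) := by
  rw [mul_comm]
  exact ofReal_jap_rpow_mul_jap_rpow_le (norm_nonneg _) (hu ▸ norm_par_le hω u)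
    (by rw [par_smul_right, norm_smul, norm_smul, hu, mul_one, mul_comm]) (norm_perp_le hω _)
    hb hbg hag hg

end Integrands

/-- For `d ≥ 2`, `β > d/2` and suitably small `ε > 0` (depending on `β`), the
angular-averaging integrals
`∫_{S^{d-1}} ⟨W^⊥⟩^{1−2β} ⟨W^∥⟩^{d−2+ε} dω` and
`∫_{S^{d-1}} ⟨W^⊥⟩^{ε} ⟨W^∥⟩^{d−1−2β} dω`
(w.r.t. the surface ((d−1)-Hausdorff) measure on the unit sphere)
are bounded uniformly in `W`. -/
theorem stmt_13 (d : ℕ) (hd : 2 ≤ d) (β : ℝ) (hβ : (d : ℝ) / 2 < β) :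
    ∃ ε : ℝ, 0 < ε ∧ ∃ C : ℝ≥0∞, C ≠ ⊤ ∧ ∀ W : Ed d,
      (∫⁻ ω in Metric.sphere (0 : Ed d) 1,
          ENNReal.ofReal ((jap (perp ω W)) ^ (1 - 2 * β) *
            (jap (par ω W)) ^ ((d : ℝ) - 2 + ε)) ∂μH[(d : ℝ) - 1]) ≤ C
      ∧ (∫⁻ ω in Metric.sphere (0 : Ed d) 1,
          ENNReal.ofReal ((jap (perp ω W)) ^ ε *
            (jap (par ω W)) ^ ((d : ℝ) - 1 - 2 * β)) ∂μH[(d : ℝ) - 1]) ≤ C := by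
  obtain ⟨n, rfl⟩ : ∃ n, d = n + 1 := ⟨d - 1, by omega⟩
  have hn : (1 : ℝ) ≤ n := by exact_mod_cast (by omega : 1 ≤ n)
  push_cast at hβ ⊢
  simp only [add_sub_cancel_right]
  obtain ⟨C₁, hC₁, hperp⟩ := exists_hausdorffMeasure_sphere_norm_perp_le n
  obtain ⟨C₂, hC₂, hpar⟩ := exists_hausdorffMeasure_sphere_norm_par_le n
  refine ⟨1 / 2, one_half_pos, _, ENNReal.add_ne_top.mpr
    ⟨mul_two_rpow_mul_inv_one_sub_two_rpow_ne_top (γ := n - 1 / 2) (m := n) hC₁ (by linarith),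
      mul_two_rpow_mul_inv_one_sub_two_rpow_ne_top (γ := 3 / 4) (m := 1) hC₂ (by norm_num)⟩,
    fun W => ?_⟩
  obtain ⟨R, u, hu, rfl⟩ := exists_norm_eq_one_eq_smul W
  have hS : MeasurableSet (sphere (0 : Ed (n + 1)) 1) := isClosed_sphere.measurableSet
  have hω : ∀ ω ∈ sphere (0 : Ed (n + 1)) 1, ‖ω‖ = 1 := fun ω => mem_sphere_zero_iff_norm.mp
  refine ⟨le_add_right ?_, le_add_left ?_⟩
  · refine (setLIntegral_mono' hS fun ω h => ofReal_jap_rpow_mul_le_norm_perp_rpow (hω ω h) hu R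
      (g := n - 1 / 2) (by linarith) (by linarith) (by linarith) (by linarith)).trans ?_
    exact setLIntegral_ofReal_rpow_neg_le hC₁ (by linarith) (by linarith)
      (fun ω h => hu ▸ norm_perp_le (hω ω h) u) (fun t _ => hperp u hu t)
  · refine (setLIntegral_mono' hS fun ω h => ofReal_jap_rpow_mul_le_norm_par_rpow (hω ω h) hu R
      (g := 3 / 4) (by norm_num) (by norm_num) (by linarith) (by norm_num)).trans ?_
    exact setLIntegral_ofReal_rpow_neg_le hC₂ (by norm_num) (by norm_num)
      (fun ω h => hu ▸ norm_par_le (hω ω h) u)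
      (fun t _ => (hpar u hu t).trans_eq (by rw [pow_one]))
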